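/- Let B be a Banach A-bimodule and let n ≥ 2 be an even integer. If B^(n+1)·B^(n) = A^(n+1), i.e., every element of A^(n+1) has the form b^(n+1)b^(n) with b^(n+1) ∈ B^(n+1) and b^(n) ∈ B^(n), and the left weak topological center Z̃ℓ_{A^(n)}(B^(n)) = {b^(n) ∈ B^(n) : a^(n) ↦ b^(n)a^(n) is weak*-to-weak continuous} equals B^(n), then A is a reflexive Banach space. -/

import Mathlib

/-!
Write `A^(n) = (A^(n-1))*`. Each `b^(n)` acts weak*-continuously on `A^(n)`, so every functional
`b^(n+1)b^(n) = b^(n+1) ∘ (b^(n) · _)` on `A^(n)` is weak*-continuous, i.e. evaluation at a point of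
`A^(n-1)`. The factorisation hypothesis therefore makes `A^(n-1)` reflexive. Reflexivity passes
from the dual of a Banach space to the space itself (a functional on `X**` vanishing on the closed
subspace `X` comes from some `f ∈ X*` with `f = 0`), and so descends from `A^(n-1)` to `A`.
-/

open NormedSpace Filter Topology

noncomputable section

universe u

/-- The Arens adjoint of a bounded bilinear map `m : X × Y → Z`:
`⟨adjB m z' x, y⟩ = ⟨z', m x y⟩`.  Its triple iterate `adjB (adjB (adjB m))` is the Arens
(triple adjoint) extension `m*** : X** × Y** → Z**`. -/
def adjB {X Y Z : Type*} [NormedAddCommGroup X] [NormedSpace ℂ X]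
    [NormedAddCommGroup Y] [NormedSpace ℂ Y] [NormedAddCommGroup Z] [NormedSpace ℂ Z]
    (m : X →L[ℂ] Y →L[ℂ] Z) : StrongDual ℂ Z →L[ℂ] X →L[ℂ] StrongDual ℂ Y :=
  ((ContinuousLinearMap.compL ℂ X (Y →L[ℂ] Z) (Y →L[ℂ] ℂ)).flip m).comp
    (ContinuousLinearMap.compL ℂ Y Z ℂ)

/-- A pair consisting of a Banach algebra (carrier `X`, multiplication `mul`) and a Banach
`X`-bimodule (carrier `Y`, left action `pl`, right action `pr`), recorded through its bounded
(bi)linear structure maps. -/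
structure APair : Type (u + 1) where
  X : Type u
  Y : Type u
  [nX : NormedAddCommGroup X]
  [mX : NormedSpace ℂ X]
  [nY : NormedAddCommGroup Y]
  [mY : NormedSpace ℂ Y]
  mul : X →L[ℂ] X →L[ℂ] X
  pl : X →L[ℂ] Y →L[ℂ] Y
  pr : Y →L[ℂ] X →L[ℂ] Y

attribute [instance] APair.nX APair.mX APair.nY APair.mY

/-- Passage to biduals: `X ↦ X**`, `Y ↦ Y**`, with the first Arens product on `X**` and the
Arens triple-adjoint extensions of the module actions. -/
def APair.bidual (P : APair) : APair where
  X := StrongDual ℂ (StrongDual ℂ P.X)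
  Y := StrongDual ℂ (StrongDual ℂ P.Y)
  mul := adjB (adjB (adjB P.mul))
  pl := adjB (adjB (adjB P.pl))
  pr := adjB (adjB (adjB P.pr))

/-- `P.iter k` is the `2k`-th dual level of the pair `P`: the Banach algebra `A^(2k)` acting on
the Banach bimodule `B^(2k)`. -/
def APair.iter (P : APair) : ℕ → APair
  | 0 => P
  | k + 1 => (P.iter k).bidual

variable (A B : Type u) [NonUnitalNormedRing A] [NormedSpace ℂ A]
  [SMulCommClass ℂ A A] [IsScalarTower ℂ A A] [CompleteSpace A]
  [NormedAddCommGroup B] [NormedSpace ℂ B] [CompleteSpace B]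

variable (πl : A →L[ℂ] B →L[ℂ] B) (πr : B →L[ℂ] A →L[ℂ] B)

/-- The base pair: the Banach algebra `A` together with the Banach `A`-bimodule `B`. -/
def basePair : APair where
  X := A
  Y := B
  mul := ContinuousLinearMap.mul ℂ A
  pl := πl
  pr := πr

theorem Submodule.exists_dual_eq_zero_on_ne_zero_of_notMem {𝕜 E : Type*} [RCLike 𝕜]
    [NormedAddCommGroup E] [NormedSpace 𝕜 E] (S : Submodule 𝕜 E) [IsClosed (S : Set E)]
    {x : E} (hx : x ∉ S) : ∃ g : StrongDual 𝕜 E, (∀ y ∈ S, g y = 0) ∧ g x ≠ 0 := by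
  have hq : ‖S.mkQ x‖ ≠ 0 := by
    rw [norm_ne_zero_iff]; simpa using hx
  obtain ⟨g, -, hg⟩ := exists_dual_vector 𝕜 (S.mkQ x) hq
  refine ⟨g.comp S.mkQL, fun y hy => ?_, ?_⟩
  · simp [(Submodule.Quotient.mk_eq_zero S).2 hy]
  · change g (S.mkQ x) ≠ 0
    rw [hg]
    exact_mod_cast hq

theorem surjective_inclusionInDoubleDual_of_dual {𝕜 E : Type*} [RCLike 𝕜]
    [NormedAddCommGroup E] [NormedSpace 𝕜 E] [CompleteSpace E]
    (h : Function.Surjective (inclusionInDoubleDual 𝕜 (StrongDual 𝕜 E))) :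
    Function.Surjective (inclusionInDoubleDual 𝕜 E) := by
  intro F
  by_contra hF
  set S := LinearMap.range (inclusionInDoubleDual 𝕜 E : E →ₗ[𝕜] StrongDual 𝕜 (StrongDual 𝕜 E))
  have hJ : Isometry (inclusionInDoubleDual 𝕜 E) := (inclusionInDoubleDualLi 𝕜).isometry
  have : IsClosed (S : Set (StrongDual 𝕜 (StrongDual 𝕜 E))) := by
    rw [LinearMap.coe_range]
    exact hJ.isClosedEmbedding.isClosed_range
  obtain ⟨g, hgS, hgF⟩ :=
    S.exists_dual_eq_zero_on_ne_zero_of_notMem (𝕜 := 𝕜) (x := F) (by simpa [S] using hF)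
  obtain ⟨f, rfl⟩ := h g
  have hf : f = 0 := ContinuousLinearMap.ext fun x => hgS _ ⟨x, rfl⟩
  simp [hf] at hgF

theorem WeakDual.exists_inclusionInDoubleDual_eq_of_continuous {𝕜 F : Type*}
    [NontriviallyNormedField 𝕜] [NormedAddCommGroup F] [NormedSpace 𝕜 F]
    (φ : StrongDual 𝕜 (StrongDual 𝕜 F)) (hφ : Continuous fun a : WeakDual 𝕜 F => φ a) :
    ∃ x : F, inclusionInDoubleDual 𝕜 F x = φ := by
  obtain ⟨x, hx⟩ := LinearMap.dualEmbedding_surjective (topDualPairing 𝕜 F)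
    ⟨(φ : StrongDual 𝕜 F →ₗ[𝕜] 𝕜), hφ⟩
  exact ⟨x, ContinuousLinearMap.ext fun a => DFunLike.congr_fun hx a⟩

theorem APair.surjective_inclusionInDoubleDual_of_iter (P : APair) [CompleteSpace P.X] (k : ℕ)
    (h : Function.Surjective (inclusionInDoubleDual ℂ (StrongDual ℂ (P.iter k).X))) :
    Function.Surjective (inclusionInDoubleDual ℂ P.X) := by
  induction k with
  | zero => exact surjective_inclusionInDoubleDual_of_dual h
  | succ k ih =>
    exact ih (surjective_inclusionInDoubleDual_of_dual (surjective_inclusionInDoubleDual_of_dual h))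

-- Here `n = 2 * (j + 1)`: `A^(n)` and `B^(n)` are the biduals of `((basePair A B πl πr).iter j).X`
-- and `((basePair A B πl πr).iter j).Y`.
theorem stmt12
    (j : ℕ)
    (hfac : ∀ a3 : StrongDual ℂ (StrongDual ℂ (StrongDual ℂ ((basePair A B πl πr).iter j).X)),
      ∃ (b3 : StrongDual ℂ (StrongDual ℂ (StrongDual ℂ ((basePair A B πl πr).iter j).Y)))
        (b2 : StrongDual ℂ (StrongDual ℂ ((basePair A B πl πr).iter j).Y)),
        a3 = b3.comp (adjB (adjB (adjB ((basePair A B πl πr).iter j).pr)) b2))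
    (hz : ∀ b2 : StrongDual ℂ (StrongDual ℂ ((basePair A B πl πr).iter j).Y),
      Continuous fun a : WeakDual ℂ (StrongDual ℂ ((basePair A B πl πr).iter j).X) =>
        (adjB (adjB (adjB ((basePair A B πl πr).iter j).pr)) b2 a :
          WeakSpace ℂ (StrongDual ℂ (StrongDual ℂ ((basePair A B πl πr).iter j).Y)))) :
    Function.Surjective (inclusionInDoubleDual ℂ A) := by
  have hX : Function.Surjective
      (inclusionInDoubleDual ℂ (StrongDual ℂ ((basePair A B πl πr).iter j).X)) := by
    intro a3
    obtain ⟨b3, b2, rfl⟩ := hfac a3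
    exact WeakDual.exists_inclusionInDoubleDual_eq_of_continuous _ (b3.continuous.comp (hz b2))
  have : CompleteSpace (basePair A B πl πr).X := ‹CompleteSpace A›
  exact (basePair A B πl πr).surjective_inclusionInDoubleDual_of_iter j hX

end
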